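/- Let n, a ∈ ℕ, d ∈ ℤ and x ∈ ℝ with gcd(a,d) = 1. Then a^{n−1} ∑_{l=0}^{a−1} B̄ₙ(x + dl/a) = B̄ₙ(ax). -/

import Mathlib

open Finset ArithmeticFunction
open scoped Real Classical
open scoped ArithmeticFunction.Moebius

/-- The `n`-th Bernoulli function `B̄ₙ(x)`: `B̄₁(x) = 0` for integer `x`, and otherwise
`B̄ₙ(x) = Bₙ({x})`, the `n`-th Bernoulli polynomial at the fractional part of `x`. -/
noncomputable def Bbar (n : ℕ) (x : ℝ) : ℝ :=
  if n = 1 ∧ ∃ k : ℤ, (k : ℝ) = x then 0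
  else Polynomial.eval (Int.fract x) (Polynomial.map (algebraMap ℚ ℝ) (Polynomial.bernoulli n))

/-- `δ_ℤ(x) = 1` if `x` is an integer, `0` otherwise. -/
noncomputable def deltaZ (x : ℝ) : ℝ := if ∃ k : ℤ, (k : ℝ) = x then 1 else 0

/-- Jordan's totient function `J_α(q) = q^α ∏_{p ∣ q} (1 - p^{-α})`. -/
noncomputable def Jtot (α q : ℕ) : ℝ :=
  (q : ℝ) ^ α * ∏ p ∈ q.primeFactors, (1 - 1 / (p : ℝ) ^ α)

/-- Dirichlet L-function, adjusted to be total in the modulus. -/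
noncomputable def Lfn {q : ℕ} (χ : DirichletCharacter ℂ q) (s : ℂ) : ℂ :=
  if h : q ≠ 0 then
    haveI : NeZero q := ⟨h⟩
    DirichletCharacter.LFunction χ s
  else 0

/-- The conjugate Dirichlet character `χ̄`. -/
noncomputable def conjChar {q : ℕ} (χ : DirichletCharacter ℂ q) : DirichletCharacter ℂ q :=
  χ.ringHomComp (starRingEnd ℂ)

/-- `V_{χ,q}(m₁,m₂;a,b) = ∑ χ(a) χ̄(b) L(m₁,χ) L(m₂,χ̄)`, summed over Dirichlet characters
`χ mod q` with `χ(-1) = (-1)^{m₁} = (-1)^{m₂}`. -/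
noncomputable def V2 (q m₁ m₂ : ℕ) (a b : ℤ) : ℂ :=
  ∑ χ : DirichletCharacter ℂ q,
    if χ (-1) = (-1) ^ m₁ ∧ χ (-1) = (-1) ^ m₂ then
      χ (a : ZMod q) * conjChar χ (b : ZMod q) * Lfn χ m₁ * Lfn (conjChar χ) m₂
    else 0

/-- `V_{χ₁,χ₂,q}(m₁,m₂,m₃;a,b,c)
  = ∑ χ₁(a) χ₂(b) (χ₁χ₂)̄(c) L(m₁,χ₁) L(m₂,χ₂) L(m₃,(χ₁χ₂)̄)`, summed over pairs of
Dirichlet characters mod `q` with `χ₁(-1) = (-1)^{m₁}` and `χ₂(-1) = (-1)^{m₂}`. -/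
noncomputable def V3 (q m₁ m₂ m₃ : ℕ) (a b c : ℤ) : ℂ :=
  ∑ χ₁ : DirichletCharacter ℂ q, ∑ χ₂ : DirichletCharacter ℂ q,
    if χ₁ (-1) = (-1) ^ m₁ ∧ χ₂ (-1) = (-1) ^ m₂ then
      χ₁ (a : ZMod q) * χ₂ (b : ZMod q) * conjChar (χ₁ * χ₂) (c : ZMod q) *
        Lfn χ₁ m₁ * Lfn χ₂ m₂ * Lfn (conjChar (χ₁ * χ₂)) m₃
    else 0

/-- The quantity `R(m,n,q;a,b)` of Theorem 2.1. -/
noncomputable def Rfun (m n q a b : ℕ) : ℝ :=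
  n * (b : ℝ) ^ (n - 1) *
    ∑ j ∈ range (m + 1), (m.choose j : ℝ) *
      ((-1) ^ j * (a : ℝ) ^ (m - j) / ((m + n - j : ℕ) : ℝ)) *
      ∑ l ∈ Icc 1 b, Bbar j (a * l / b) *
        ∑ d ∈ q.divisors, (μ (q / d) : ℝ) * (d : ℝ) ^ j * Bbar (m + n - j) (d * l / b)

/-- The constant `C₁` of Theorem 2.1. -/
noncomputable def Cone (q m n a b : ℕ) : ℝ :=
  (-1 : ℝ) ^ (n - 1) * m.factorial * n.factorial * (Nat.gcd a b : ℝ) ^ (m + n) *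
      (bernoulli (m + n) : ℝ) * Jtot (m + n) q /
      ((a : ℝ) ^ n * (b : ℝ) ^ m * ((m + n).factorial : ℝ)) -
    (if m = 1 then (1 : ℝ) else 0) * (if n = 1 then (1 : ℝ) else 0) * (q.totient : ℝ) / 4

/-- The quantity `A_{m₁,m₂,m₃,q}(a,b,c)` of Theorem 2.4. -/
noncomputable def Afun (m₁ m₂ m₃ q a b c : ℕ) : ℝ :=
  m₃ * (b : ℝ) ^ (m₂ - 1) * (c : ℝ) ^ (m₃ - 1) *
    ∑ j ∈ Icc 1 m₂, (m₂.choose j : ℝ) * ((-1) ^ j * j / ((m₂ + m₃ - j : ℕ) : ℝ)) *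
      ∑ j₁ ∈ range (m₁ + 1), (m₁.choose j₁ : ℝ) *
        ((-1) ^ j₁ * (a : ℝ) ^ (m₁ - j₁) / ((m₁ + j - j₁ : ℕ) : ℝ)) *
        ∑ l ∈ Icc 1 c, ∑ l₁ ∈ Icc 1 b,
          Bbar j₁ (a * l₁ / b + a * l / c) *
            ∑ d ∈ q.divisors, (μ (q / d) : ℝ) * (d : ℝ) ^ j₁ *
              Bbar (m₂ + m₃ - j) (d * l / c) * Bbar (m₁ + j - j₁) (d * l₁ / b + d * l / c)

/-- The quantity `B_{m₁,m₂,m₃,q}(a,b,c)` of Theorem 2.4. -/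
noncomputable def Bfun (m₁ m₂ m₃ q a b c : ℕ) : ℝ :=
  m₁ * m₂ * (a : ℝ) ^ (m₁ - 1) * (b : ℝ) ^ (m₂ - 1) *
    ∑ j ∈ Icc 1 m₃, (m₃.choose j : ℝ) * (1 / ((m₂ + m₃ - j : ℕ) : ℝ)) *
      ∑ j₁ ∈ range (j + 1), (j.choose j₁ : ℝ) *
        ((-1) ^ j₁ * (c : ℝ) ^ (m₃ - j₁) / ((m₁ + j - j₁ : ℕ) : ℝ)) *
        ∑ l ∈ Icc 1 b, ∑ l₁ ∈ Icc 1 a,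
          Bbar j₁ (c * l₁ / a + c * l / b) *
            ∑ d ∈ q.divisors, (μ (q / d) : ℝ) * (d : ℝ) ^ j₁ *
              Bbar (m₂ + m₃ - j) (d * l / b) * Bbar (m₁ + j - j₁) (d * l₁ / a)

/-- The quantity `C_{m₁,m₂,m₃,q}(a,b,c)` of Theorem 2.4. -/
noncomputable def Cfun (m₁ m₂ m₃ q a b c : ℕ) : ℝ :=
  -((m₂ : ℝ) * m₁.factorial * (b : ℝ) ^ (m₂ - 1) * (Nat.gcd a c : ℝ) ^ m₁ / (c : ℝ) ^ m₁) *
    ∑ j ∈ Icc 1 m₃, (m₃.choose j : ℝ) *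
      ((-1) ^ j * (Nat.gcd a c : ℝ) ^ j * (c : ℝ) ^ (m₃ - j) * (j.factorial : ℝ) /
        ((a : ℝ) ^ j * ((m₂ + m₃ - j : ℕ) : ℝ) * ((m₁ + j).factorial : ℝ))) *
      ∑ l ∈ Icc 1 b, Bbar (m₁ + j) ((a * c / Nat.gcd a c : ℕ) * l / b) *
        ∑ d ∈ q.divisors, (μ (q / d) : ℝ) * (d : ℝ) ^ (m₁ + j) * Bbar (m₂ + m₃ - j) (d * l / b)

/-- The quantity `D_{m₁,m₂,m₃,q}(b,c)` of Theorem 2.4. -/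
noncomputable def Dfun (m₁ m₂ m₃ q b c : ℕ) : ℝ :=
  (if m₁ = 1 then (1 : ℝ) else 0) * m₂ * m₃ * (b : ℝ) ^ (m₂ - 1) * (c : ℝ) ^ (m₃ - 1) /
      (4 * ((m₂ + m₃ - 1 : ℕ) : ℝ)) *
    ∑ d ∈ q.divisors, (μ (q / d) : ℝ) * (d : ℝ) ^ m₁ *
      ∑ l ∈ Icc 1 b, Bbar (m₂ + m₃ - 1) (d * l / b) * deltaZ (c * l / b)

/-- The constant `C₂` of Theorem 2.4. -/
noncomputable def Ctwo (q m₁ m₂ m₃ a b c : ℕ) : ℝ :=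
  (-1 : ℝ) ^ (m₁ + m₂) * m₁.factorial * m₂.factorial * m₃.factorial *
    (Nat.gcd (a * Nat.gcd b c) (b * c) : ℝ) ^ (m₁ + m₂ + m₃) *
    (bernoulli (m₁ + m₂ + m₃) : ℝ) * Jtot (m₁ + m₂ + m₃) q /
    ((a : ℝ) ^ (m₂ + m₃) * (b : ℝ) ^ (m₁ + m₃) * (c : ℝ) ^ (m₁ + m₂) *
      ((m₁ + m₂ + m₃).factorial : ℝ))


section RaabeAux
open PowerSeries

noncomputable def Fb (s : ℚ) : ℚ⟦X⟧ :=
  mk fun n => Polynomial.aeval s (((1 : ℚ) / n.factorial) • Polynomial.bernoulli n)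

lemma Fb_spec (s : ℚ) : Fb s * (exp ℚ - 1) = X * rescale s (exp ℚ) :=
  Polynomial.bernoulli_generating_function s

lemma ps_raabe (a : ℕ) (ha : 0 < a) (t : ℚ) :
    (∑ l ∈ range a, rescale (a : ℚ) (Fb ((t + l)/a))) = C (a : ℚ) * Fb t := by
  set E := exp ℚ with hE
  have haQ : (a : ℚ) ≠ 0 := Nat.cast_ne_zero.2 ha.ne'
  have h1 : E - 1 ≠ 0 := by
    intro h
    have := congrArg (coeff 1) h
    simp [hE, coeff_exp] at this
  have h2 : rescale (a : ℚ) E - 1 ≠ 0 := by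
    intro h
    have := congrArg (coeff 1) h
    simp [hE, coeff_rescale, coeff_exp] at this
    exact ha.ne' this
  have step1 : ∀ l ∈ range a,
      rescale (a : ℚ) (Fb ((t + l)/a)) * (rescale (a : ℚ) E - 1)
        = C (a : ℚ) * X * (rescale t E * E ^ l) := by
    intro l _
    calc rescale (a : ℚ) (Fb ((t + l)/a)) * (rescale (a : ℚ) E - 1)
        = rescale (a : ℚ) (Fb ((t + l)/a) * (E - 1)) := by rw [map_mul, map_sub, map_one]
      _ = rescale (a : ℚ) (X * rescale ((t + l)/a) E) := by rw [Fb_spec]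
      _ = C (a : ℚ) * X * (rescale t E * E ^ l) := by
          rw [map_mul, rescale_X, rescale_rescale, div_mul_cancel₀ _ haQ,
            exp_pow_eq_rescale_exp, exp_mul_exp_eq_exp_add]
  have key : (∑ l ∈ range a, rescale (a : ℚ) (Fb ((t + l)/a))) * ((E - 1) * (rescale (a : ℚ) E - 1))
      = C (a : ℚ) * Fb t * ((E - 1) * (rescale (a : ℚ) E - 1)) := by
    calc (∑ l ∈ range a, rescale (a : ℚ) (Fb ((t + l)/a))) * ((E - 1) * (rescale (a : ℚ) E - 1))
        = (∑ l ∈ range a, rescale (a : ℚ) (Fb ((t + l)/a)) * (rescale (a : ℚ) E - 1)) * (E - 1) := by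
          rw [Finset.sum_mul, Finset.sum_mul]
          exact Finset.sum_congr rfl fun l _ => by ring
      _ = (∑ l ∈ range a, C (a : ℚ) * X * (rescale t E * E ^ l)) * (E - 1) := by
          rw [Finset.sum_congr rfl step1]
      _ = C (a : ℚ) * X * rescale t E * ((∑ l ∈ range a, E ^ l) * (E - 1)) := by
          rw [Finset.sum_mul, Finset.sum_mul, Finset.mul_sum]
          exact Finset.sum_congr rfl fun l _ => by ring
      _ = C (a : ℚ) * X * rescale t E * (rescale (a : ℚ) E - 1) := by
          rw [geom_sum_mul, exp_pow_eq_rescale_exp]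
      _ = C (a : ℚ) * Fb t * ((E - 1) * (rescale (a : ℚ) E - 1)) := by
          rw [show C (a : ℚ) * Fb t * ((E - 1) * (rescale (a : ℚ) E - 1))
              = C (a : ℚ) * (Fb t * (E - 1)) * (rescale (a : ℚ) E - 1) by ring, Fb_spec]
          ring
  exact mul_right_cancel₀ (mul_ne_zero h1 h2) key

lemma rat_raabe (n a : ℕ) (ha : 0 < a) (t : ℚ) :
    ∑ l ∈ range a, (a:ℚ)^n * (Polynomial.bernoulli n).eval ((t + l)/a)
      = a * (Polynomial.bernoulli n).eval t := by
  have h := congrArg (coeff n) (ps_raabe a ha t)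
  simp only [map_sum, coeff_rescale, Fb, coeff_mk, coeff_C_mul, map_smul, smul_eq_mul,
    Polynomial.aeval_def, Polynomial.eval₂_eq_eval_map, Algebra.algebraMap_self,
    Polynomial.map_id] at h
  have hfac : ((n.factorial : ℚ)) ≠ 0 := Nat.cast_ne_zero.2 n.factorial_ne_zero
  have := congrArg (fun z => (n.factorial : ℚ) * z) h
  rw [Finset.mul_sum] at this
  calc ∑ l ∈ range a, (a:ℚ)^n * (Polynomial.bernoulli n).eval ((t + l)/a)
      = ∑ l ∈ range a, (n.factorial : ℚ) * ((a:ℚ)^n * ((1 / n.factorial) * (Polynomial.bernoulli n).eval ((t + l)/a))) := by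
        refine Finset.sum_congr rfl fun l _ => ?_
        field_simp
    _ = (n.factorial : ℚ) * ((a:ℚ) * ((1 / n.factorial) * (Polynomial.bernoulli n).eval t)) := this
    _ = a * (Polynomial.bernoulli n).eval t := by field_simp

lemma poly_raabe (n a : ℕ) (ha : 0 < a) :
    ∑ l ∈ range a, Polynomial.C ((a:ℚ)^n) *
        (Polynomial.bernoulli n).comp (Polynomial.C (1/(a:ℚ)) * (Polynomial.X + Polynomial.C (l:ℚ)))
      = Polynomial.C (a:ℚ) * Polynomial.bernoulli n := by
  apply Polynomial.funext
  intro t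
  have haQ : (a : ℚ) ≠ 0 := Nat.cast_ne_zero.2 ha.ne'
  rw [Polynomial.eval_finset_sum, Polynomial.eval_mul, Polynomial.eval_C]
  calc ∑ l ∈ range a, Polynomial.eval t (Polynomial.C ((a:ℚ)^n) *
        (Polynomial.bernoulli n).comp (Polynomial.C (1/(a:ℚ)) * (Polynomial.X + Polynomial.C (l:ℚ))))
      = ∑ l ∈ range a, (a:ℚ)^n * (Polynomial.bernoulli n).eval ((t + l)/a) := by
        refine Finset.sum_congr rfl fun l _ => ?_
        rw [Polynomial.eval_mul, Polynomial.eval_C, Polynomial.eval_comp, Polynomial.eval_mul,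
          Polynomial.eval_C, Polynomial.eval_add, Polynomial.eval_X, Polynomial.eval_C]
        congr 1
        field_simp
    _ = a * (Polynomial.bernoulli n).eval t := rat_raabe n a ha t

lemma real_raabe (n a : ℕ) (ha : 0 < a) (t : ℝ) :
    ∑ l ∈ range a, (a:ℝ)^n *
        Polynomial.eval ((t + l)/a) (Polynomial.map (algebraMap ℚ ℝ) (Polynomial.bernoulli n))
      = a * Polynomial.eval t (Polynomial.map (algebraMap ℚ ℝ) (Polynomial.bernoulli n)) := by
  have haR : (a : ℝ) ≠ 0 := Nat.cast_ne_zero.2 ha.ne'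
  have h := congrArg (fun p => Polynomial.eval t (Polynomial.map (algebraMap ℚ ℝ) p)) (poly_raabe n a ha)
  simp only [Polynomial.map_sum, Polynomial.map_mul, Polynomial.map_comp, Polynomial.map_C,
    Polynomial.map_add, Polynomial.map_X, Polynomial.eval_finset_sum, Polynomial.eval_mul,
    Polynomial.eval_C, Polynomial.eval_comp, Polynomial.eval_add, Polynomial.eval_X,
    map_pow, map_natCast, eq_ratCast, Rat.cast_div, Rat.cast_one, Rat.cast_natCast,
    Polynomial.eval_natCast, Polynomial.map_natCast, Polynomial.map_pow, Polynomial.eval_pow] at h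
  calc ∑ l ∈ range a, (a:ℝ)^n *
        Polynomial.eval ((t + l)/a) (Polynomial.map (algebraMap ℚ ℝ) (Polynomial.bernoulli n))
      = ∑ l ∈ range a, (a:ℝ)^n *
        Polynomial.eval (1/(a:ℝ) * (t + l)) (Polynomial.map (algebraMap ℚ ℝ) (Polynomial.bernoulli n)) := by
        refine Finset.sum_congr rfl fun l _ => ?_
        rw [one_div, inv_mul_eq_div]
    _ = a * Polynomial.eval t (Polynomial.map (algebraMap ℚ ℝ) (Polynomial.bernoulli n)) := h

end RaabeAux

lemma Bbar_add_int (n : ℕ) (y : ℝ) (k : ℤ) : Bbar n (y + k) = Bbar n y := by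
  unfold Bbar
  rw [Int.fract_add_intCast]
  refine if_congr (and_congr_right fun _ => ?_) rfl rfl
  constructor
  · rintro ⟨m, hm⟩; exact ⟨m - k, by push_cast; linarith⟩
  · rintro ⟨m, hm⟩; exact ⟨m + k, by push_cast; linarith⟩

lemma Bbar_eq (n : ℕ) (y : ℝ) :
    Bbar n y = Polynomial.eval (Int.fract y) (Polynomial.map (algebraMap ℚ ℝ) (Polynomial.bernoulli n))
      + (if n = 1 ∧ ∃ k : ℤ, (k : ℝ) = y then (1/2 : ℝ) else 0) := by
  unfold Bbar
  split_ifs with h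
  · obtain ⟨hn, k, hk⟩ := h
    subst hn
    rw [← hk, Int.fract_intCast, Polynomial.eval_zero_map, Polynomial.bernoulli_eval_zero,
      bernoulli_one]
    norm_num
  · ring

lemma sum_image_range {a : ℕ} {i : ℕ → ℕ} (hmem : ∀ l, l < a → i l < a)
    (hinj : ∀ l, l < a → ∀ l', l' < a → i l = i l' → l = l') (g : ℕ → ℝ) :
    ∑ l ∈ range a, g (i l) = ∑ l ∈ range a, g l := by
  have hinj' : ∀ x ∈ range a, ∀ y ∈ range a, i x = i y → x = y :=
    fun l hl l' hl' h => hinj l (mem_range.1 hl) l' (mem_range.1 hl') h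
  rw [← Finset.sum_image hinj']
  congr 1
  apply Finset.eq_of_subset_of_card_le
  · intro k hk
    obtain ⟨l, hl, rfl⟩ := Finset.mem_image.1 hk
    exact mem_range.2 (hmem l (mem_range.1 hl))
  · rw [Finset.card_image_of_injOn fun l hl l' hl' h =>
      hinj l (mem_range.1 hl) l' (mem_range.1 hl') h]

lemma twist_sum (n a : ℕ) (ha : 0 < a) (d : ℤ) (had : Int.gcd (a : ℤ) d = 1) (x : ℝ) :
    ∑ l ∈ range a, Bbar n (x + (d : ℝ) * l / a) = ∑ l ∈ range a, Bbar n (x + l / a) := by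
  have haZ : (0:ℤ) < a := by exact_mod_cast ha
  have haR : (0:ℝ) < a := by exact_mod_cast ha
  set i : ℕ → ℕ := fun l => ((d * l) % (a:ℤ)).toNat with hidef
  have hmem : ∀ l, l < a → i l < a := by
    intro l _
    have h1 := Int.emod_nonneg (d*l) haZ.ne'
    have h2 := Int.emod_lt_of_pos (d*l) haZ
    simp only [hidef]
    omega
  have hinj : ∀ l, l < a → ∀ l', l' < a → i l = i l' → l = l' := by
    intro l hl l' hl' h
    have h1 := Int.emod_nonneg (d*l) haZ.ne'
    have h1' := Int.emod_nonneg (d*l') haZ.ne'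
    have heq : (d * l) % (a:ℤ) = (d * l') % (a:ℤ) := by
      simp only [hidef] at h
      omega
    have hmod : (a:ℤ) ∣ d * l' - d * l := Int.ModEq.dvd heq
    have hco : IsCoprime (a:ℤ) d := Int.isCoprime_iff_gcd_eq_one.mpr had
    have hdl : (a:ℤ) ∣ d * ((l':ℤ) - l) := by
      rw [mul_sub]; exact hmod
    have hd2 : (a:ℤ) ∣ ((l':ℤ) - l) := by
      exact hco.dvd_of_dvd_mul_left hdl
    have := Int.eq_zero_of_abs_lt_dvd hd2 (by rw [abs_lt]; constructor <;> omega)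
    omega
  have hval : ∀ l ∈ range a, Bbar n (x + (d : ℝ) * l / a) = Bbar n (x + (i l) / a) := by
    intro l _
    have h1 := Int.emod_nonneg (d*l) haZ.ne'
    have hz : d * (l:ℤ) = (i l : ℤ) + a * ((d * l) / (a:ℤ)) := by
      have h2 := Int.emod_add_mul_ediv (d*(l:ℤ)) a
      have h3 : ((i l : ℤ)) = (d * l) % (a:ℤ) := by simp only [hidef]; omega
      omega
    have hz' : (d:ℝ) * l = (i l : ℕ) + (a:ℝ) * ((d * (l:ℤ) / (a:ℤ) : ℤ) : ℝ) := by
      exact_mod_cast congrArg (Int.cast : ℤ → ℝ) hz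
    have hkey : x + (d:ℝ) * l / a = x + (i l : ℕ) / a + ((d * (l:ℤ) / (a:ℤ) : ℤ) : ℝ) := by
      rw [hz', add_div, mul_div_cancel_left₀ _ haR.ne']
      ring
    rw [hkey, Bbar_add_int]
  rw [Finset.sum_congr rfl hval]
  exact sum_image_range hmem hinj (fun k => Bbar n (x + k / a))

lemma fract_shift (a : ℕ) (ha : 0 < a) (x : ℝ) (g : ℝ → ℝ) :
    ∑ l ∈ range a, g (Int.fract (x + l / a)) = ∑ l ∈ range a, g ((Int.fract ((a:ℝ) * x) + l) / a) := by
  have haR : (0:ℝ) < a := by exact_mod_cast ha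
  have haR1 : (1:ℝ) ≤ a := by exact_mod_cast ha
  set M : ℕ → ℤ := fun l => ⌊(a:ℝ)*x⌋ + l - a * ⌊x + l/a⌋ with hMdef
  have key : ∀ l : ℕ, ((M l : ℤ) : ℝ) = a * Int.fract (x + l/a) - Int.fract ((a:ℝ)*x) := by
    intro l
    simp only [hMdef, ← Int.self_sub_floor]
    push_cast
    have : (a:ℝ) * ((l:ℝ)/a) = l := by field_simp
    nlinarith [this]
  have hbounds : ∀ l : ℕ, 0 ≤ M l ∧ M l < a := by
    intro l
    have k := key l
    have f1 := Int.fract_nonneg (x + l/a)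
    have f2 := Int.fract_lt_one (x + l/a)
    have f3 := Int.fract_nonneg ((a:ℝ)*x)
    have f4 := Int.fract_lt_one ((a:ℝ)*x)
    constructor
    · by_contra hc
      push_neg at hc
      have hle : M l ≤ -1 := by omega
      have : ((M l : ℤ):ℝ) ≤ -1 := by exact_mod_cast hle
      nlinarith
    · by_contra hc
      push_neg at hc
      have : ((a:ℝ)) ≤ ((M l : ℤ):ℝ) := by exact_mod_cast hc
      nlinarith
  set i : ℕ → ℕ := fun l => (M l).toNat with hidef
  have hmem : ∀ l, l < a → i l < a := by
    intro l _
    have := hbounds l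
    simp only [hidef]
    omega
  have hval : ∀ l ∈ range a, g (Int.fract (x + l/a)) = g ((Int.fract ((a:ℝ)*x) + i l)/a) := by
    intro l _
    congr 1
    have hb := hbounds l
    have : ((i l : ℕ) : ℝ) = ((M l : ℤ) : ℝ) := by
      simp only [hidef]
      exact_mod_cast congrArg (Int.cast : ℤ → ℝ) (Int.toNat_of_nonneg hb.1)
    rw [this, key l]
    field_simp
    ring
  have hinj : ∀ l, l < a → ∀ l', l' < a → i l = i l' → l = l' := by
    intro l hl l' hl' h
    have hb := hbounds l
    have hb' := hbounds l'
    have hM : M l = M l' := by simp only [hidef] at h; omega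
    have hreal : a * Int.fract (x + l/a) - Int.fract ((a:ℝ)*x)
        = a * Int.fract (x + l'/a) - Int.fract ((a:ℝ)*x) := by
      rw [← key l, ← key l', hM]
    have hfr : Int.fract (x + l/a) = Int.fract (x + l'/a) := by
      have h2 : (a:ℝ) * Int.fract (x + l/a) = (a:ℝ) * Int.fract (x + l'/a) := by linarith
      exact mul_left_cancel₀ haR.ne' h2
    have hfloor : ((l:ℝ) - l') = a * ((⌊x + l/a⌋ : ℝ) - ⌊x + l'/a⌋) := by
      simp only [Int.fract] at hfr
      field_simp at hfr ⊢
      linarith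
    have hZ : ((l:ℤ) - l') = a * (⌊x + l/a⌋ - ⌊x + l'/a⌋) := by exact_mod_cast hfloor
    have hdvd : (a:ℤ) ∣ ((l:ℤ) - l') := ⟨_, hZ⟩
    have := Int.eq_zero_of_abs_lt_dvd hdvd (by rw [abs_lt]; constructor <;> omega)
    omega
  rw [Finset.sum_congr rfl hval]
  exact sum_image_range hmem hinj (fun k => g ((Int.fract ((a:ℝ)*x) + k)/a))

lemma delta_shift (a : ℕ) (ha : 0 < a) (x : ℝ) (c : ℝ) :
    ∑ l ∈ range a, (if ∃ k : ℤ, (k:ℝ) = x + l / a then c else 0)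
      = if ∃ k : ℤ, (k:ℝ) = (a:ℝ) * x then c else 0 := by
  have haR : (0:ℝ) < a := by exact_mod_cast ha
  have haZ : (0:ℤ) < a := by exact_mod_cast ha
  by_cases hax : ∃ k : ℤ, (k:ℝ) = (a:ℝ) * x
  · obtain ⟨m, hm⟩ := hax
    set l₀ : ℕ := ((-m) % a).toNat with hl₀def
    have h1 : (0:ℤ) ≤ (-m) % a := Int.emod_nonneg _ haZ.ne'
    have h2 : (-m) % a < a := Int.emod_lt_of_pos _ haZ
    have hl₀a : l₀ < a := by omega
    have hdvd : (a:ℤ) ∣ m + l₀ := by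
      have h5 : (a:ℤ) ∣ (-m) - (-m) % a := Int.dvd_self_sub_of_emod_eq rfl
      obtain ⟨q, hq⟩ := h5
      have h4 : (l₀ : ℤ) = (-m) % a := by simp only [hl₀def]; omega
      exact ⟨-q, by linear_combination h4 - hq⟩
    rw [if_pos ⟨m, hm⟩, Finset.sum_eq_single_of_mem l₀ (mem_range.2 hl₀a)]
    · rw [if_pos]
      obtain ⟨k, hk⟩ := hdvd
      refine ⟨k, ?_⟩
      have hkR : (m:ℝ) + l₀ = a * k := by exact_mod_cast congrArg (Int.cast : ℤ → ℝ) hk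
      have hx : (a:ℝ) * (x + l₀/a) = a * k := by
        rw [mul_add, ← hm, mul_div_cancel₀ _ haR.ne']
        exact hkR
      have := mul_left_cancel₀ haR.ne' hx
      linarith
    · intro l hl hne
      rw [if_neg]
      rintro ⟨k, hk⟩
      have hkR : (k:ℝ) * a = m + l := by
        rw [hk, add_mul, div_mul_cancel₀ _ haR.ne']
        linarith [hm]
      have hZ : (k:ℤ) * a = m + l := by exact_mod_cast hkR
      obtain ⟨k₀, hk₀⟩ := hdvd
      have hdl : ((l:ℤ) - l₀) = a * (k - k₀) := by linear_combination -hZ - hk₀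
      have hlt : l < a := mem_range.1 hl
      have := Int.eq_zero_of_abs_lt_dvd ⟨_, hdl⟩ (by rw [abs_lt]; constructor <;> omega)
      exact hne (by omega)
  · rw [if_neg hax]
    refine Finset.sum_eq_zero fun l hl => ?_
    rw [if_neg]
    rintro ⟨k, hk⟩
    refine hax ⟨k * a - l, ?_⟩
    push_cast
    rw [hk]
    field_simp
    ring


/-- Equation (2.5): the twisted Raabe multiplication formula. -/
theorem raabe_twisted (n a : ℕ) (hn : 0 < n) (ha : 0 < a) (d : ℤ)
    (had : Int.gcd (a : ℤ) d = 1) (x : ℝ) :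
    (a : ℝ) ^ (n - 1) * ∑ l ∈ range a, Bbar n (x + (d : ℝ) * l / a) = Bbar n ((a : ℝ) * x) := by
  have haR : (0:ℝ) < a := by exact_mod_cast ha
  rw [twist_sum n a ha d had x]
  simp_rw [Bbar_eq n]
  rw [Finset.sum_add_distrib, mul_add]
  congr 1
  · rw [fract_shift a ha x
      (fun y => Polynomial.eval y (Polynomial.map (algebraMap ℚ ℝ) (Polynomial.bernoulli n)))]
    have h := real_raabe n a ha (Int.fract ((a:ℝ)*x))
    rw [← Finset.mul_sum] at h
    have hpow : (a:ℝ)^n = (a:ℝ)^(n-1) * a := by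
      conv_lhs => rw [show n = (n-1)+1 by omega]
      rw [pow_succ]
    rw [hpow] at h
    exact mul_left_cancel₀ haR.ne' (by linear_combination h)
  · by_cases hn1 : n = 1
    · subst hn1
      simp only [Nat.sub_self, pow_zero, one_mul, true_and]
      exact delta_shift a ha x (1/2)
    · simp [hn1]
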